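/- Let y ∈ ℝ, τ > 1/γ where γ = log 2 / log 3, and let μ be the natural measure on the middle-third Cantor set. Define A_n^y(n^(−τ)) = {x ∈ ℝ : ‖2^n x − y‖ < n^(−τ)}. Then Σ_{n=1}^∞ μ(A_n^y(n^(−τ))) < ∞, and consequently μ-almost no x satisfies ‖2^n x − y‖ < n^(−τ) for infinitely many n. -/

import Mathlib

/-!
Split the Cantor set `K` into its `2 ^ m` triadic intervals of level `m`. Covering such an
interval by its `2 ^ j` subintervals of level `m + j` shows that it has measure at most `2⁻¹ ^ m`,
and an interval of length `ℓ ≤ 1` meets at most two triadic intervals of the level `m` with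
`3⁻¹ ^ (m + 1) < ℓ ≤ 3⁻¹ ^ m`; hence `μ [a, b] ≤ 4 (b - a) ^ γ`. Now take `3 ^ m ≈ 2 ^ n`: every
triadic interval of level `m` has length at most `2⁻¹ ^ n`, so it meets at most three of the
intervals of length `2 σ / 2 ^ n` that make up `A_n^y(σ)`. Summing over the `2 ^ m ≈ 2 ^ (n γ)`
triadic intervals gives `μ (A_n^y(σ)) ≤ 72 σ ^ γ`. For `σ = n ^ (-τ)` this is summable because
`τ γ > 1`, and the Borel–Cantelli lemma gives the second claim.
-/

open MeasureTheory

/-- the Hausdorff dimension of the middle-third Cantor set -/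
noncomputable def cantorDim : ℝ := Real.log 2 / Real.log 3

/-- the natural measure on the middle-third Cantor set -/
noncomputable def cantorMeasure : Measure ℝ := μH[cantorDim].restrict cantorSet

/-- distance from `x` to the nearest integer -/
noncomputable def nint (x : ℝ) : ℝ := |x - round x|

/-- `A_n^y(σ) = {x : ‖2^n x - y‖ < σ}` -/
def approxSet (n : ℕ) (y σ : ℝ) : Set ℝ := {x : ℝ | nint (2 ^ n * x - y) < σ}

open Set Filter
open scoped ENNReal Topology

noncomputable def cantorIntervalLeft : List Bool → ℝ
  | [] => 0
  | false :: l => cantorIntervalLeft l / 3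
  | true :: l => (2 + cantorIntervalLeft l) / 3

-- The interval of `preCantorSet l.length` whose ternary digits are `0`/`2` as read off `l`,
-- most significant digit first.
def cantorInterval (l : List Bool) : Set ℝ :=
  Icc (cantorIntervalLeft l) (cantorIntervalLeft l + 3⁻¹ ^ l.length)

lemma cantorIntervalLeft_nonneg (l : List Bool) : 0 ≤ cantorIntervalLeft l := by
  induction l with
  | nil => simp [cantorIntervalLeft]
  | cons b l ih => cases b <;> simp only [cantorIntervalLeft] <;> linarith

lemma cantorIntervalLeft_add_le_one (l : List Bool) :
    cantorIntervalLeft l + 3⁻¹ ^ l.length ≤ 1 := by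
  induction l with
  | nil => simp [cantorIntervalLeft]
  | cons b l ih =>
    cases b <;> simp only [cantorIntervalLeft, List.length_cons, pow_succ] <;> linarith

lemma cantorInterval_nil : cantorInterval [] = Icc 0 1 := by
  simp [cantorInterval, cantorIntervalLeft]

lemma cantorInterval_append_subset (l t : List Bool) :
    cantorInterval (l ++ t) ⊆ cantorInterval l := by
  suffices cantorIntervalLeft l ≤ cantorIntervalLeft (l ++ t) ∧
      cantorIntervalLeft (l ++ t) + 3⁻¹ ^ (l ++ t).length ≤ cantorIntervalLeft l + 3⁻¹ ^ l.length
    from Icc_subset_Icc this.1 this.2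
  induction l with
  | nil =>
    simp only [List.nil_append, cantorIntervalLeft, List.length_nil, pow_zero, zero_add]
    exact ⟨cantorIntervalLeft_nonneg t, cantorIntervalLeft_add_le_one t⟩
  | cons b l ih =>
    cases b <;> simp only [cantorIntervalLeft, List.cons_append, List.length_cons, pow_succ] <;>
      constructor <;> linarith [ih.1, ih.2]

lemma preCantorSet_subset_iUnion_cantorInterval (m : ℕ) :
    preCantorSet m ⊆ ⋃ v : List.Vector Bool m, cantorInterval v.toList := by
  induction m with
  | zero =>
    exact fun x hx ↦ mem_iUnion.2 ⟨.nil, by rwa [List.Vector.toList_nil, cantorInterval_nil]⟩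
  | succ m ih =>
    rintro _ (⟨x, hx, rfl⟩ | ⟨x, hx, rfl⟩) <;> obtain ⟨v, hv⟩ := mem_iUnion.1 (ih hx)
    on_goal 1 => refine mem_iUnion.2 ⟨.cons false v, ?_⟩
    on_goal 2 => refine mem_iUnion.2 ⟨.cons true v, ?_⟩
    all_goals
      simp only [cantorInterval, cantorIntervalLeft, List.Vector.toList_cons, List.length_cons,
        pow_succ, mem_Icc] at hv ⊢
      constructor <;> linarith [hv.1, hv.2]

lemma cantorSet_subset_iUnion_cantorInterval (m : ℕ) :
    cantorSet ⊆ ⋃ v : List.Vector Bool m, cantorInterval v.toList :=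
  (iInter_subset _ m).trans (preCantorSet_subset_iUnion_cantorInterval m)

lemma two_mul_le_abs_sub_cantorIntervalLeft {l l' : List Bool} (hlen : l.length = l'.length)
    (hne : l ≠ l') : 2 * 3⁻¹ ^ l.length ≤ |cantorIntervalLeft l - cantorIntervalLeft l'| := by
  induction l generalizing l' with
  | nil => exact absurd (List.length_eq_zero_iff.1 hlen.symm).symm hne
  | cons b l ih =>
    obtain _ | ⟨b', l'⟩ := l'
    · simp at hlen
    simp only [List.length_cons, Nat.add_right_cancel_iff] at hlen
    rw [List.length_cons, pow_succ]
    by_cases hb : b = b'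
    · subst hb
      have hsep := ih hlen fun h ↦ hne (h ▸ rfl)
      have hscale : |cantorIntervalLeft (b :: l) - cantorIntervalLeft (b :: l')| =
          |cantorIntervalLeft l - cantorIntervalLeft l'| / 3 := by
        rw [← abs_of_pos (three_pos : (0 : ℝ) < 3), ← abs_div]
        cases b <;> simp only [cantorIntervalLeft] <;> ring_nf
      rw [hscale]
      linarith
    · have hδ : (3 : ℝ)⁻¹ ^ l.length ≤ 1 := pow_le_one₀ (by norm_num) (by norm_num)
      -- intervals with different first digits lie in different thirds of `[0, 1]`
      have hgap : ∀ c d : List Bool, c.length = l.length → d.length = l.length →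
          2 * (3⁻¹ ^ l.length * 3⁻¹) ≤ (2 + cantorIntervalLeft c) / 3 - cantorIntervalLeft d / 3 :=
        fun c d hc hd ↦ by
          have := cantorIntervalLeft_nonneg c
          have := cantorIntervalLeft_add_le_one d
          rw [hd] at this
          linarith
      cases b <;> cases b' <;> first | exact absurd rfl hb | simp only [cantorIntervalLeft]
      · rw [abs_sub_comm]; exact (hgap _ _ hlen.symm rfl).trans (le_abs_self _)
      · exact (hgap _ _ rfl hlen.symm).trans (le_abs_self _)

lemma eq_of_mem_cantorInterval {l l' : List Bool} (hlen : l.length = l'.length) {x : ℝ}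
    (hx : x ∈ cantorInterval l) (hx' : x ∈ cantorInterval l') : l = l' := by
  by_contra hne
  have hsep := two_mul_le_abs_sub_cantorIntervalLeft hlen hne
  have hδ : (0 : ℝ) < 3⁻¹ ^ l.length := by positivity
  simp only [cantorInterval, mem_Icc, ← hlen] at hx hx'
  have : |cantorIntervalLeft l - cantorIntervalLeft l'| ≤ 3⁻¹ ^ l.length :=
    abs_sub_le_iff.2 ⟨by linarith, by linarith⟩
  linarith

lemma cantorSet_inter_cantorInterval_subset (l : List Bool) (j : ℕ) :
    cantorSet ∩ cantorInterval l ⊆ ⋃ t : List.Vector Bool j, cantorInterval (l ++ t.toList) := by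
  rintro x ⟨hxK, hxl⟩
  obtain ⟨r, hr⟩ := mem_iUnion.1 (cantorSet_subset_iUnion_cantorInterval (l.length + j) hxK)
  have hprefix : r.toList.take l.length = l := by
    refine eq_of_mem_cantorInterval (by simp) ?_ hxl
    exact cantorInterval_append_subset _ (r.toList.drop l.length) (by rwa [List.take_append_drop])
  refine mem_iUnion.2 ⟨⟨r.toList.drop l.length, by simp⟩, ?_⟩
  have hsplit : l ++ r.toList.drop l.length = r.toList := by
    conv_rhs => rw [← List.take_append_drop l.length r.toList, hprefix]
  rwa [List.Vector.toList_mk, hsplit]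

lemma cantorDim_pos : 0 < cantorDim :=
  div_pos (Real.log_pos (by norm_num)) (Real.log_pos (by norm_num))

lemma cantorDim_le_one : cantorDim ≤ 1 :=
  (div_le_one (Real.log_pos (by norm_num))).2 (Real.log_le_log (by norm_num) (by norm_num))

lemma three_rpow_cantorDim : (3 : ℝ) ^ cantorDim = 2 :=
  Real.rpow_logb (by norm_num) (by norm_num) (by norm_num)

lemma three_pow_rpow_cantorDim (m : ℕ) : ((3 : ℝ) ^ m) ^ cantorDim = 2 ^ m := by
  rw [← Real.rpow_pow_comm (by norm_num), three_rpow_cantorDim]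

lemma inv_three_pow_rpow_cantorDim (m : ℕ) : ((3 : ℝ)⁻¹ ^ m) ^ cantorDim = 2⁻¹ ^ m := by
  rw [inv_pow, Real.inv_rpow (by positivity), three_pow_rpow_cantorDim, inv_pow]

lemma ediam_cantorInterval (l : List Bool) :
    Metric.ediam (cantorInterval l) = ENNReal.ofReal (3⁻¹ ^ l.length) := by
  rw [cantorInterval, Real.ediam_Icc, add_sub_cancel_left]

lemma hausdorffMeasure_cantorSet_inter_cantorInterval_le (l : List Bool) :
    μH[cantorDim] (cantorSet ∩ cantorInterval l) ≤ ENNReal.ofReal (2⁻¹ ^ l.length) := by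
  have hsum (j : ℕ) : ∑ t : List.Vector Bool j, Metric.ediam (cantorInterval (l ++ t.toList)) ^
      cantorDim = ENNReal.ofReal (2⁻¹ ^ l.length) := by
    simp only [ediam_cantorInterval, List.length_append, List.Vector.toList_length,
      ENNReal.ofReal_rpow_of_nonneg (by positivity : (0 : ℝ) ≤ 3⁻¹ ^ _) cantorDim_pos.le,
      inv_three_pow_rpow_cantorDim, Finset.sum_const, Finset.card_univ, card_vector,
      Fintype.card_bool, nsmul_eq_mul]
    rw [← ENNReal.ofReal_natCast, ← ENNReal.ofReal_mul (by positivity)]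
    congr 1
    push_cast
    rw [pow_add, mul_left_comm, ← mul_pow]
    norm_num
  have hr : Tendsto (fun j : ℕ ↦ ENNReal.ofReal (3⁻¹ ^ (l.length + j))) atTop (𝓝 0) := by
    have := (tendsto_pow_atTop_nhds_zero_of_lt_one (by norm_num) (by norm_num : (3 : ℝ)⁻¹ < 1)
      ).const_mul (3⁻¹ ^ l.length)
    rw [mul_zero] at this
    simpa only [pow_add, ENNReal.ofReal_zero] using ENNReal.tendsto_ofReal this
  calc μH[cantorDim] (cantorSet ∩ cantorInterval l)
      ≤ liminf (fun j ↦ ∑ t : List.Vector Bool j,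
          Metric.ediam (cantorInterval (l ++ t.toList)) ^ cantorDim) atTop :=
        Measure.hausdorffMeasure_le_liminf_sum _ _ _ hr (fun j (t : List.Vector Bool j) ↦ _)
          (.of_forall fun j t ↦ by simp [ediam_cantorInterval])
          (.of_forall (cantorSet_inter_cantorInterval_subset l))
    _ = ENNReal.ofReal (2⁻¹ ^ l.length) := by simp only [hsum, liminf_const]

open Classical in
lemma card_cantorInterval_inter_Icc_nonempty_le_two {m : ℕ} {a b : ℝ} (hab : b - a ≤ 3⁻¹ ^ m) :
    (Finset.univ.filter fun v : List.Vector Bool m ↦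
      (cantorInterval v.toList ∩ Icc a b).Nonempty).card ≤ 2 := by
  by_contra! h
  obtain ⟨u, v, w, hu, hv, hw, huv, huw, hvw⟩ := Finset.two_lt_card_iff.1 h
  have hδ : (0 : ℝ) < 3⁻¹ ^ m := by positivity
  have hnear : ∀ v : List.Vector Bool m, (cantorInterval v.toList ∩ Icc a b).Nonempty →
      |cantorIntervalLeft v.toList - a| ≤ 3⁻¹ ^ m := by
    rintro v ⟨x, hxv, hxab⟩
    simp only [cantorInterval, List.Vector.toList_length, mem_Icc] at hxv hxab
    exact abs_le.2 ⟨by linarith, by linarith⟩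
  have hsep : ∀ {v w : List.Vector Bool m}, v ≠ w →
      2 * 3⁻¹ ^ m ≤ |cantorIntervalLeft v.toList - cantorIntervalLeft w.toList| := fun hne ↦ by
    simpa using two_mul_le_abs_sub_cantorIntervalLeft (by simp)
      (List.Vector.toList_injective.ne hne)
  -- three left endpoints within `3⁻¹ ^ m` of `a`, pairwise at least `2 * 3⁻¹ ^ m` apart
  have hu' := abs_le.1 (hnear u (Finset.mem_filter.1 hu).2)
  have hv' := abs_le.1 (hnear v (Finset.mem_filter.1 hv).2)
  have hw' := abs_le.1 (hnear w (Finset.mem_filter.1 hw).2)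
  have huv' := hsep huv
  have huw' := hsep huw
  have hvw' := hsep hvw
  rcases abs_cases (cantorIntervalLeft u.toList - cantorIntervalLeft v.toList) with h1 | h1 <;>
  rcases abs_cases (cantorIntervalLeft u.toList - cantorIntervalLeft w.toList) with h2 | h2 <;>
  rcases abs_cases (cantorIntervalLeft v.toList - cantorIntervalLeft w.toList) with h3 | h3 <;>
  linarith

lemma hausdorffMeasure_cantorSet_inter_Icc_le {a b : ℝ} (hab : a < b) :
    μH[cantorDim] (cantorSet ∩ Icc a b) ≤ ENNReal.ofReal (4 * (b - a) ^ cantorDim) := by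
  rcases lt_or_ge 1 (b - a) with hlong | hshort
  · have hK : cantorSet ∩ Icc a b ⊆ cantorSet ∩ cantorInterval [] := fun x hx ↦
      ⟨hx.1, cantorInterval_nil ▸ cantorSet_subset_unitInterval hx.1⟩
    have := Real.one_le_rpow hlong.le cantorDim_pos.le
    calc μH[cantorDim] (cantorSet ∩ Icc a b)
        ≤ ENNReal.ofReal (2⁻¹ ^ ([] : List Bool).length) :=
          (measure_mono hK).trans (hausdorffMeasure_cantorSet_inter_cantorInterval_le [])
      _ ≤ ENNReal.ofReal (4 * (b - a) ^ cantorDim) := ENNReal.ofReal_le_ofReal (by simp; linarith)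
  obtain ⟨m, hlo, hhi⟩ := exists_nat_pow_near_of_lt_one (sub_pos.2 hab) hshort
    (by norm_num : (0 : ℝ) < 3⁻¹) (by norm_num)
  classical
  set S := Finset.univ.filter fun v : List.Vector Bool m ↦
    (cantorInterval v.toList ∩ Icc a b).Nonempty
  have hcover : cantorSet ∩ Icc a b ⊆ ⋃ v ∈ S, cantorSet ∩ cantorInterval v.toList := by
    rintro x ⟨hxK, hxab⟩
    obtain ⟨v, hxv⟩ := mem_iUnion.1 (cantorSet_subset_iUnion_cantorInterval m hxK)
    exact mem_biUnion (Finset.mem_filter.2 ⟨Finset.mem_univ v, x, hxv, hxab⟩) ⟨hxK, hxv⟩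
  have hpow : (2 : ℝ)⁻¹ ^ m ≤ 2 * (b - a) ^ cantorDim := by
    calc (2 : ℝ)⁻¹ ^ m = 2 * ((3 : ℝ)⁻¹ ^ (m + 1)) ^ cantorDim := by
          rw [inv_three_pow_rpow_cantorDim, pow_succ]; ring
      _ ≤ 2 * (b - a) ^ cantorDim := by gcongr; exact cantorDim_pos.le
  calc μH[cantorDim] (cantorSet ∩ Icc a b)
      ≤ ∑ v ∈ S, μH[cantorDim] (cantorSet ∩ cantorInterval v.toList) :=
        (measure_mono hcover).trans (measure_biUnion_finset_le _ _)
    _ ≤ ∑ _v ∈ S, ENNReal.ofReal (2⁻¹ ^ m) := Finset.sum_le_sum fun v _ ↦ by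
        simpa using hausdorffMeasure_cantorSet_inter_cantorInterval_le v.toList
    _ ≤ 2 * ENNReal.ofReal (2⁻¹ ^ m) := by
        rw [Finset.sum_const, nsmul_eq_mul]
        gcongr
        exact_mod_cast card_cantorInterval_inter_Icc_nonempty_le_two hhi
    _ ≤ ENNReal.ofReal (4 * (b - a) ^ cantorDim) := by
        rw [← ENNReal.ofReal_ofNat 2, ← ENNReal.ofReal_mul (by norm_num)]
        exact ENNReal.ofReal_le_ofReal (by linarith)

lemma approxSet_inter_Icc_subset {n : ℕ} {y σ u : ℝ} (hσ : σ ≤ 1) :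
    approxSet n y σ ∩ Icc u (u + 2⁻¹ ^ n) ⊆
      ⋃ k ∈ Finset.Icc ⌊2 ^ n * u - y⌋ (⌊2 ^ n * u - y⌋ + 2),
        Icc ((y + k - σ) / 2 ^ n) ((y + k + σ) / 2 ^ n) := by
  rintro x ⟨hxA, hxu⟩
  set c := 2 ^ n * u - y
  set k := round (2 ^ n * x - y)
  have hk : |2 ^ n * x - y - k| < σ := hxA
  obtain ⟨hk1, hk2⟩ := abs_lt.1 hk
  have h2n : (0 : ℝ) < 2 ^ n := by positivity
  have hscale : (2 : ℝ) ^ n * 2⁻¹ ^ n = 1 := by rw [← mul_pow]; norm_num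
  have hz : c ≤ 2 ^ n * x - y ∧ 2 ^ n * x - y ≤ c + 1 := by
    constructor <;> nlinarith [hxu.1, hxu.2]
  have hfl1 := Int.floor_le c
  have hfl2 := Int.lt_floor_add_one c
  refine mem_iUnion₂.2 ⟨k, Finset.mem_Icc.2 ⟨?_, ?_⟩, ?_, ?_⟩
  · have := Int.cast_lt.1 (by push_cast; linarith : ((⌊c⌋ - 1 : ℤ) : ℝ) < k)
    omega
  · have := Int.cast_lt.1 (by push_cast; linarith : (k : ℝ) < ((⌊c⌋ + 3 : ℤ) : ℝ))
    omega
  · rw [div_le_iff₀ h2n]; linarith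
  · rw [le_div_iff₀ h2n]; linarith

lemma hausdorffMeasure_cantorSet_inter_approxSet_inter_Icc_le {n : ℕ} {y σ : ℝ} (hσ0 : 0 < σ)
    (hσ1 : σ ≤ 1) (u : ℝ) :
    μH[cantorDim] (cantorSet ∩ (approxSet n y σ ∩ Icc u (u + 2⁻¹ ^ n))) ≤
      ENNReal.ofReal (12 * (2 * σ / 2 ^ n) ^ cantorDim) := by
  set c := ⌊2 ^ n * u - y⌋
  calc μH[cantorDim] (cantorSet ∩ (approxSet n y σ ∩ Icc u (u + 2⁻¹ ^ n)))
      ≤ ∑ k ∈ Finset.Icc c (c + 2),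
          μH[cantorDim] (cantorSet ∩ Icc ((y + k - σ) / 2 ^ n) ((y + k + σ) / 2 ^ n)) := by
        refine (measure_mono ?_).trans (measure_biUnion_finset_le _ _)
        rw [← inter_iUnion₂]
        exact inter_subset_inter_right _ (approxSet_inter_Icc_subset hσ1)
    _ ≤ ∑ _k ∈ Finset.Icc c (c + 2), ENNReal.ofReal (4 * (2 * σ / 2 ^ n) ^ cantorDim) :=
        Finset.sum_le_sum fun k _ ↦ by
          have hlen : (y + k + σ) / 2 ^ n - (y + k - σ) / 2 ^ n = 2 * σ / 2 ^ n := by ring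
          rw [← hlen]
          exact hausdorffMeasure_cantorSet_inter_Icc_le (by rw [← sub_pos, hlen]; positivity)
    _ = ENNReal.ofReal (12 * (2 * σ / 2 ^ n) ^ cantorDim) := by
        rw [Finset.sum_const, Int.card_Icc, show (c + 2 + 1 - c).toNat = 3 by omega, nsmul_eq_mul,
          ← ENNReal.ofReal_natCast, ← ENNReal.ofReal_mul (by norm_num)]
        ring_nf

lemma cantorMeasure_approxSet_le (n : ℕ) (y : ℝ) {σ : ℝ} (hσ : σ ≤ 1) :
    cantorMeasure (approxSet n y σ) ≤ ENNReal.ofReal (72 * σ ^ cantorDim) := by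
  rcases le_or_gt σ 0 with hσ0 | hσ0
  · have : approxSet n y σ = ∅ :=
      eq_empty_of_forall_notMem fun x hx ↦ (abs_nonneg _).not_gt (hx.trans_le hσ0)
    simp [this]
  -- level `m` with `2 ^ n < 3 ^ m ≤ 3 * 2 ^ n`: its intervals are no longer than `2⁻¹ ^ n`, and
  -- there are `2 ^ m = (3 ^ m) ^ γ ≤ 2 * (2 ^ n) ^ γ` of them
  obtain ⟨k, hk, hk'⟩ := exists_nat_pow_near (one_le_pow₀ one_le_two : (1 : ℝ) ≤ 2 ^ n)
    (by norm_num : (1 : ℝ) < 3)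
  set m := k + 1
  have hfine : (3 : ℝ)⁻¹ ^ m ≤ 2⁻¹ ^ n := by
    rw [inv_pow, inv_pow]; exact inv_anti₀ (by positivity) hk'.le
  have hcount : (2 : ℝ) ^ m * (2 * σ / 2 ^ n) ^ cantorDim ≤ 6 * σ ^ cantorDim := by
    have hγ := cantorDim_pos.le
    calc (2 : ℝ) ^ m * (2 * σ / 2 ^ n) ^ cantorDim = (3 ^ m * (2 * σ / 2 ^ n)) ^ cantorDim := by
          rw [Real.mul_rpow (by positivity) (by positivity), three_pow_rpow_cantorDim]
      _ ≤ (6 * σ) ^ cantorDim := by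
          refine Real.rpow_le_rpow (by positivity) ?_ hγ
          rw [← mul_div_assoc, div_le_iff₀ (by positivity), pow_succ]
          nlinarith
      _ = 6 ^ cantorDim * σ ^ cantorDim := Real.mul_rpow (by norm_num) hσ0.le
      _ ≤ 6 * σ ^ cantorDim := by
          gcongr
          exact Real.rpow_le_self_of_one_le (by norm_num) cantorDim_le_one
  have hcover : approxSet n y σ ∩ cantorSet ⊆
      ⋃ v : List.Vector Bool m, cantorSet ∩ (approxSet n y σ ∩ cantorInterval v.toList) := by
    rintro x ⟨hxA, hxK⟩
    obtain ⟨v, hxv⟩ := mem_iUnion.1 (cantorSet_subset_iUnion_cantorInterval m hxK)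
    exact mem_iUnion.2 ⟨v, hxK, hxA, hxv⟩
  have hshort (v : List.Vector Bool m) : cantorInterval v.toList ⊆
      Icc (cantorIntervalLeft v.toList) (cantorIntervalLeft v.toList + 2⁻¹ ^ n) :=
    Icc_subset_Icc_right (by simpa using hfine)
  rw [cantorMeasure, Measure.restrict_apply' isClosed_cantorSet.measurableSet]
  calc μH[cantorDim] (approxSet n y σ ∩ cantorSet)
      ≤ ∑ v : List.Vector Bool m,
          μH[cantorDim] (cantorSet ∩ (approxSet n y σ ∩ cantorInterval v.toList)) :=
        (measure_mono hcover).trans (measure_iUnion_fintype_le _ _)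
    _ ≤ ∑ _v : List.Vector Bool m, ENNReal.ofReal (12 * (2 * σ / 2 ^ n) ^ cantorDim) :=
        Finset.sum_le_sum fun v _ ↦ (measure_mono (inter_subset_inter_right _
          (inter_subset_inter_right _ (hshort v)))).trans
          (hausdorffMeasure_cantorSet_inter_approxSet_inter_Icc_le hσ0 hσ _)
    _ = ENNReal.ofReal (2 ^ m * (12 * (2 * σ / 2 ^ n) ^ cantorDim)) := by
        rw [Finset.sum_const, Finset.card_univ, card_vector, Fintype.card_bool, nsmul_eq_mul,
          ← ENNReal.ofReal_natCast, ← ENNReal.ofReal_mul (by positivity)]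
        norm_num
    _ ≤ ENNReal.ofReal (72 * σ ^ cantorDim) := ENNReal.ofReal_le_ofReal (by linarith)

lemma summable_toReal_and_measure_limsup_eq_zero {α ι : Type*} [MeasurableSpace α] [Countable ι]
    {μ : Measure α} {s : ι → Set α} {f : ι → ℝ} (hf : Summable f)
    (hs : ∀ i, μ (s i) ≤ ENNReal.ofReal (f i)) :
    (Summable fun i ↦ (μ (s i)).toReal) ∧ μ (limsup s cofinite) = 0 := by
  have hfin : ∑' i, μ (s i) ≠ ∞ := ne_top_of_le_ne_top
    (ENNReal.tsum_coe_ne_top_iff_summable.2 hf.toNNReal) (ENNReal.tsum_le_tsum hs)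
  exact ⟨ENNReal.summable_toReal hfin, measure_limsup_cofinite_eq_zero hfin⟩

theorem stmt10 (y τ : ℝ) (hτ : 1 / cantorDim < τ) :
    (Summable fun n : ℕ => (cantorMeasure (approxSet n y ((n : ℝ) ^ (-τ)))).toReal) ∧
    cantorMeasure {x : ℝ | {n : ℕ | nint (2 ^ n * x - y) < (n : ℝ) ^ (-τ)}.Infinite} = 0 := by
  have hτγ : 1 < τ * cantorDim := by rwa [div_lt_iff₀ cantorDim_pos] at hτ
  have hτ0 : 0 < τ := (one_div_pos.2 cantorDim_pos).trans hτ
  have hbound (n : ℕ) : cantorMeasure (approxSet n y ((n : ℝ) ^ (-τ))) ≤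
      ENNReal.ofReal (72 * (n : ℝ) ^ (-(τ * cantorDim))) := by
    have hσ : (n : ℝ) ^ (-τ) ≤ 1 := by
      rcases n.eq_zero_or_pos with rfl | hn
      · simp [Real.zero_rpow (neg_ne_zero.2 hτ0.ne')]
      · exact Real.rpow_le_one_of_one_le_of_nonpos (by exact_mod_cast hn) (by linarith)
    rw [← neg_mul, Real.rpow_mul (Nat.cast_nonneg n)]
    exact cantorMeasure_approxSet_le n y hσ
  have hsum : Summable fun n : ℕ ↦ 72 * (n : ℝ) ^ (-(τ * cantorDim)) :=
    (Real.summable_nat_rpow.2 (by linarith)).mul_left 72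
  obtain ⟨hsummable, hlimsup⟩ := summable_toReal_and_measure_limsup_eq_zero hsum hbound
  exact ⟨hsummable, by rwa [cofinite.limsup_set_eq] at hlimsup⟩
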